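/- Let S be a monoid and let A be an S-act whose unique decomposition into indecomposable subacts is A = ⨆_{i∈I} A_i. For i, j ∈ I define i ∼ j if and only if A_i ≅ A_j, and assume the quotient set I/∼ is finite. Then A is cancellable if and only if A is finitely decomposable (i.e., I is finite). -/

import Mathlib

/-!
An indecomposable act `A` can be cancelled: an isomorphism `e : A ⊔ B ≅ A ⊔ C` sends all of `A`
into one summand, so following `e` from `b ∈ B` until it leaves `A` takes at most one detour
through `A` and matches `B` with `C`. As cancellable acts are closed under finite coproducts,
a finitely decomposable act is cancellable. Conversely, if `I` is infinite then, `I/∼` being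
finite, some class `X` is infinite; for a component `B` in it, `A ≅ R ⊔ (X × B)` absorbs a copy
of `B`, so `A ⊔ B ≅ A ⊔ (B ⊔ B)`, whereas `B ≇ B ⊔ B` because `B` is indecomposable.
-/

universe u v w

/-- A right `S`-act structure on a type `A`: a map `A × S → A`, `(a, s) ↦ a · s`,
with `a · 1 = a` and `a · (s*t) = (a · s) · t`. (`S`-acts are additionally required
to be nonempty; this is imposed via `Nonempty` hypotheses.) -/
class RAct (S : Type u) [Monoid S] (A : Type v) : Type (max u v) where
  act : A → S → A
  act_one : ∀ a : A, act a 1 = a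
  act_mul : ∀ (a : A) (s t : S), act a (s * t) = act (act a s) t

/-- Isomorphism of `S`-acts: a bijective action-preserving map. -/
def ActIso (S : Type u) [Monoid S] (A : Type v) (B : Type w) [RAct S A] [RAct S B] : Prop :=
  ∃ e : A ≃ B, ∀ (a : A) (s : S), e (RAct.act a s) = RAct.act (e a) s

/-- The coproduct (disjoint union) of two `S`-acts, with componentwise action. -/
instance sumRAct (S : Type u) [Monoid S] (A : Type v) (B : Type w) [RAct S A] [RAct S B] :
    RAct S (A ⊕ B) where
  act x s := Sum.map (fun a => RAct.act a s) (fun b => RAct.act b s) x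
  act_one := by rintro (a | b) <;> simp [RAct.act_one]
  act_mul := by rintro (a | b) s t <;> simp [RAct.act_mul]

/-- An `S`-act `A` is cancellable if `A ⊔ B ≅ A ⊔ C` implies `B ≅ C`
for all `S`-acts `B`, `C`. -/
def Cancellable (S : Type u) [Monoid S] (A : Type u) [RAct S A] : Prop :=
  ∀ (B C : Type u) [RAct S B] [RAct S C] [Nonempty B] [Nonempty C],
    ActIso S (A ⊕ B) (A ⊕ C) → ActIso S B C

/-- A subact of an `S`-act: a nonempty subset closed under the action. -/
def IsSubact (S : Type u) [Monoid S] {A : Type v} [RAct S A] (T : Set A) : Prop :=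
  T.Nonempty ∧ ∀ a ∈ T, ∀ s : S, RAct.act a s ∈ T

/-- The induced `S`-act structure on a subact. -/
def IsSubact.ract {S : Type u} [Monoid S] {A : Type v} [RAct S A] {T : Set A}
    (hT : IsSubact S T) : RAct S T where
  act a s := ⟨RAct.act a.1 s, hT.2 a.1 a.2 s⟩
  act_one a := Subtype.ext (RAct.act_one a.1)
  act_mul a s t := Subtype.ext (RAct.act_mul a.1 s t)

/-- Two subacts are isomorphic if they are isomorphic as `S`-acts with the
induced actions. -/
def SubactIso {S : Type u} [Monoid S] {A : Type v} {A' : Type w} [RAct S A] [RAct S A']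
    {T : Set A} {U : Set A'} (hT : IsSubact S T) (hU : IsSubact S U) : Prop :=
  @ActIso S _ T U hT.ract hU.ract

/-- A subact `T` is indecomposable if it is not the disjoint union of two subacts. -/
def IndecompSubact (S : Type u) [Monoid S] {A : Type v} [RAct S A] (T : Set A) : Prop :=
  IsSubact S T ∧
    ¬ ∃ U V : Set A, IsSubact S U ∧ IsSubact S V ∧ U ∪ V = T ∧ U ∩ V = ∅

section

variable {S : Type u} [Monoid S]

@[simp] theorem RAct.act_inl {A B : Type*} [RAct S A] [RAct S B] (a : A) (s : S) :
    RAct.act (Sum.inl a : A ⊕ B) s = Sum.inl (RAct.act a s) := rfl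

@[simp] theorem RAct.act_inr {A B : Type*} [RAct S A] [RAct S B] (b : B) (s : S) :
    RAct.act (Sum.inr b : A ⊕ B) s = Sum.inr (RAct.act b s) := rfl

instance sigmaRAct {I : Type*} (F : I → Type*) [∀ i, RAct S (F i)] : RAct S (Σ i, F i) where
  act x s := ⟨x.1, RAct.act x.2 s⟩
  act_one x := by simp [RAct.act_one]
  act_mul x s t := by simp [RAct.act_mul]

instance prodRAct (X : Type*) (B : Type*) [RAct S B] : RAct S (X × B) where
  act x s := (x.1, RAct.act x.2 s)
  act_one x := by simp [RAct.act_one]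
  act_mul x s t := by simp [RAct.act_mul]

def IsEquivariant (S : Type u) [Monoid S] {A B : Type*} [RAct S A] [RAct S B] (f : A → B) :
    Prop :=
  ∀ (a : A) (s : S), f (RAct.act a s) = RAct.act (f a) s

section Equivariant

variable {A B C : Type*} [RAct S A] [RAct S B] [RAct S C]

theorem isEquivariant_inl : IsEquivariant S (Sum.inl : A → A ⊕ B) := fun _ _ => rfl

theorem IsEquivariant.comp {g : B → C} {f : A → B} (hg : IsEquivariant S g)
    (hf : IsEquivariant S f) : IsEquivariant S (g ∘ f) := fun a s => by
  simp only [Function.comp_apply, hf a s, hg (f a) s]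

theorem IsEquivariant.symm {e : A ≃ B} (he : IsEquivariant S e) : IsEquivariant S e.symm :=
  fun b s => e.injective <| by rw [he, Equiv.apply_symm_apply, Equiv.apply_symm_apply]

end Equivariant

namespace ActIso

variable {A B C D : Type*} [RAct S A] [RAct S B] [RAct S C] [RAct S D]

theorem refl : ActIso S A A := ⟨Equiv.refl A, fun _ _ => rfl⟩

theorem symm : ActIso S A B → ActIso S B A
  | ⟨e, he⟩ => ⟨e.symm, IsEquivariant.symm he⟩

theorem trans : ActIso S A B → ActIso S B C → ActIso S A C
  | ⟨e, he⟩, ⟨f, hf⟩ => ⟨e.trans f, IsEquivariant.comp (g := f) hf he⟩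

theorem sumCongr : ActIso S A B → ActIso S C D → ActIso S (A ⊕ C) (B ⊕ D)
  | ⟨e, he⟩, ⟨f, hf⟩ => ⟨e.sumCongr f, by rintro (a | c) s <;> simp [he _ s, hf _ s]⟩

theorem sumComm : ActIso S (A ⊕ B) (B ⊕ A) :=
  ⟨Equiv.sumComm A B, by rintro (a | b) s <;> rfl⟩

theorem sumAssoc : ActIso S ((A ⊕ B) ⊕ C) (A ⊕ (B ⊕ C)) :=
  ⟨Equiv.sumAssoc A B C, by rintro ((a | b) | c) s <;> rfl⟩

variable {I J : Type*}

theorem sigmaCongrLeft {F : J → Type*} [∀ j, RAct S (F j)] (e : I ≃ J) :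
    ActIso S (Σ i, F (e i)) (Σ j, F j) :=
  ⟨Equiv.sigmaCongrLeft e, fun _ _ => rfl⟩

theorem sumSigmaDistrib {F : I ⊕ J → Type*} [∀ k, RAct S (F k)] :
    ActIso S (Σ k, F k) ((Σ i, F (.inl i)) ⊕ (Σ j, F (.inr j))) :=
  ⟨Equiv.sumSigmaDistrib F, by rintro ⟨i | j, x⟩ s <;> rfl⟩

theorem sigmaOption {F : Option I → Type*} [∀ o, RAct S (F o)] :
    ActIso S (Σ o, F o) (F none ⊕ Σ i, F (some i)) :=
  ⟨{ toFun := fun | ⟨none, x⟩ => .inl x | ⟨some i, x⟩ => .inr ⟨i, x⟩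
     invFun := Sum.elim (⟨none, ·⟩) (fun p => ⟨some p.1, p.2⟩)
     left_inv := by rintro ⟨_ | i, x⟩ <;> rfl
     right_inv := by rintro (x | ⟨i, x⟩) <;> rfl },
   by rintro ⟨_ | i, x⟩ s <;> rfl⟩

theorem sigmaSplit {F : I → Type*} [∀ i, RAct S (F i)] (p : I → Prop) [DecidablePred p] :
    ActIso S (Σ i, F i) ((Σ i : {i // p i}, F i) ⊕ (Σ i : {i // ¬p i}, F i)) :=
  (sigmaCongrLeft (F := F) (Equiv.sumCompl p)).symm.trans sumSigmaDistrib

theorem sigmaEquivProd {F : I → Type*} [∀ i, RAct S (F i)] (h : ∀ i, ActIso S (F i) B) :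
    ActIso S (Σ i, F i) (I × B) := by
  choose e he using h
  exact ⟨Equiv.sigmaEquivProdOfEquiv e, fun ⟨i, x⟩ s => Prod.ext rfl (he i x s)⟩

theorem prod_sum_absorb [Infinite I] : ActIso S ((I × B) ⊕ B) (I × B) := by
  obtain ⟨τ⟩ : Nonempty (Option I ≃ I) :=
    Cardinal.eq.1 (by rw [Cardinal.mk_option, Cardinal.mk_add_one_eq])
  exact ⟨(Equiv.sumComm _ _).trans ((optionProdEquiv (α := I)).symm.trans (τ.prodCongr (.refl B))),
    by rintro (⟨i, b⟩ | b) s <;> rfl⟩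

theorem of_rel (R : B → C → Prop) (hex : ∀ b, ∃ c, R b c) (hex' : ∀ c, ∃ b, R b c)
    (huniq : ∀ {b c c'}, R b c → R b c' → c = c') (huniq' : ∀ {b b' c}, R b c → R b' c → b = b')
    (hact : ∀ {b c} (s : S), R b c → R (RAct.act b s) (RAct.act c s)) : ActIso S B C := by
  choose f hf using hex
  choose g hg using hex'
  exact ⟨⟨f, g, fun b => huniq' (hg (f b)) (hf b), fun c => huniq (hf (g c)) (hg c)⟩,
    fun b s => huniq (hf _) (hact s (hf b))⟩

end ActIso

section Cancel

variable {A B C : Type*} [RAct S A] [RAct S B] [RAct S C]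

def SumCancelRel (e : A ⊕ B ≃ A ⊕ C) (b : B) (c : C) : Prop :=
  e (.inr b) = .inr c ∨ ∃ a, e (.inr b) = .inl a ∧ e (.inl a) = .inr c

variable {e : A ⊕ B ≃ A ⊕ C}

theorem sumCancelRel_symm {b : B} {c : C} : SumCancelRel e.symm c b ↔ SumCancelRel e b c := by
  simp only [SumCancelRel, Equiv.symm_apply_eq]
  grind

theorem SumCancelRel.unique {b : B} {c c' : C} (h : SumCancelRel e b c)
    (h' : SumCancelRel e b c') : c = c' := by
  grind [SumCancelRel]

theorem SumCancelRel.act (he : IsEquivariant S e) {b : B} {c : C} (s : S)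
    (h : SumCancelRel e b c) : SumCancelRel e (RAct.act b s) (RAct.act c s) := by
  have hb : e (.inr (RAct.act b s)) = RAct.act (e (.inr b)) s := he (.inr b) s
  rcases h with h | ⟨a, h, h'⟩
  · exact .inl (by rw [hb, h]; rfl)
  · exact .inr ⟨RAct.act a s, by rw [hb, h]; rfl, by rw [← RAct.act_inl, he, h']; rfl⟩

theorem exists_sumCancelRel (H : ∀ a b, e (.inr b) = .inl a → ∃ c, e (.inl a) = .inr c)
    (b : B) : ∃ c, SumCancelRel e b c := by
  rcases h : e (.inr b) with a | c
  · obtain ⟨c, hc⟩ := H a b h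
    exact ⟨c, .inr ⟨a, h, hc⟩⟩
  · exact ⟨c, .inl h⟩

end Cancel

/-- `A` is not the disjoint union of two subacts; unlike `IndecompSubact`, the empty act
qualifies. -/
def RAct.IsPreconnected (S : Type u) [Monoid S] (A : Type*) [RAct S A] : Prop :=
  ∀ f : A → Bool, (∀ a (s : S), f (RAct.act a s) = f a) → ∀ a b, f a = f b

namespace RAct.IsPreconnected

variable {A B C : Type*} [RAct S A] [RAct S B] [RAct S C]

theorem of_isEmpty [IsEmpty A] : RAct.IsPreconnected S A := fun _ _ a => isEmptyElim a

theorem isLeft_eq (hA : RAct.IsPreconnected S A) {f : A → B ⊕ C} (hf : IsEquivariant S f)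
    (a a' : A) : (f a).isLeft = (f a').isLeft :=
  hA (fun a => (f a).isLeft) (fun a s => by rw [hf]; cases f a <;> rfl) a a'

theorem not_actIso_sum (hA : RAct.IsPreconnected S A) [Nonempty B] [Nonempty C] :
    ¬ActIso S A (B ⊕ C) := by
  rintro ⟨e, he⟩
  obtain ⟨a, ha⟩ := e.surjective (.inl (Classical.arbitrary B))
  obtain ⟨a', ha'⟩ := e.surjective (.inr (Classical.arbitrary C))
  simpa [ha, ha'] using hA.isLeft_eq he a a'

theorem apply_inl_of_apply_inr_eq_inl (hA : RAct.IsPreconnected S A) {e : A ⊕ B ≃ A ⊕ C}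
    (he : IsEquivariant S e) {a : A} {b : B} (h : e (.inr b) = .inl a) :
    ∃ c, e (.inl a) = .inr c := by
  rcases ha : e (.inl a) with a' | c
  · have := hA.isLeft_eq (he.symm.comp isEquivariant_inl) a' a
    simp [e.symm_apply_eq.2 ha.symm, e.symm_apply_eq.2 h.symm] at this
  · exact ⟨c, rfl⟩

theorem cancel (hA : RAct.IsPreconnected S A) (h : ActIso S (A ⊕ B) (A ⊕ C)) : ActIso S B C := by
  obtain ⟨e, he⟩ := h
  replace he : IsEquivariant S e := he
  have H := fun a b => hA.apply_inl_of_apply_inr_eq_inl he (a := a) (b := b)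
  have H' := fun a c => hA.apply_inl_of_apply_inr_eq_inl he.symm (a := a) (b := c)
  refine ActIso.of_rel (SumCancelRel e) (exists_sumCancelRel H)
    (fun c => (exists_sumCancelRel H' c).imp fun _ => sumCancelRel_symm.1)
    SumCancelRel.unique (fun h h' => (sumCancelRel_symm.2 h).unique (sumCancelRel_symm.2 h'))
    (fun s => SumCancelRel.act he s)

theorem cancellable {A : Type u} [RAct S A] (hA : RAct.IsPreconnected S A) : Cancellable S A :=
  fun _ _ _ _ _ _ => hA.cancel

end RAct.IsPreconnected

theorem IndecompSubact.isPreconnected {A : Type*} [RAct S A] {T : Set A}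
    (h : IndecompSubact S T) : @RAct.IsPreconnected S _ T h.1.ract := by
  let _ : RAct S T := h.1.ract
  intro f hf a b
  by_contra hab
  have hsub : ∀ U : Set T, U.Nonempty → (∀ x ∈ U, ∀ s : S, RAct.act x s ∈ U) →
      IsSubact S (Subtype.val '' U) := fun U hU hact =>
    ⟨hU.image _, by rintro _ ⟨x, hx, rfl⟩ s; exact ⟨_, hact x hx s, rfl⟩⟩
  refine h.2 ⟨_, _, hsub {x | f x = f a} ⟨a, rfl⟩ ?_, hsub {x | f x = f a}ᶜ ⟨b, Ne.symm hab⟩ ?_,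
    ?_, ?_⟩
  · intro x hx s
    simpa [hf] using hx
  · intro x hx s
    simpa [hf] using hx
  · rw [← Set.image_union, Set.union_compl_self, Set.image_univ, Subtype.range_val]
  · rw [← Set.image_inter Subtype.val_injective, Set.inter_compl_self, Set.image_empty]

namespace Cancellable

theorem of_actIso {A A' : Type u} [RAct S A] [RAct S A'] (e : ActIso S A A')
    (h : Cancellable S A') : Cancellable S A := fun B C _ _ _ _ hBC =>
  h B C ((e.symm.sumCongr .refl).trans (hBC.trans (e.sumCongr .refl)))

theorem sum {A₁ A₂ : Type u} [RAct S A₁] [RAct S A₂] (h₁ : Cancellable S A₁)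
    (h₂ : Cancellable S A₂) : Cancellable S (A₁ ⊕ A₂) := fun B C _ _ _ _ hBC =>
  h₂ B C (h₁ _ _ (ActIso.sumAssoc.symm.trans (hBC.trans ActIso.sumAssoc)))

end Cancellable

theorem cancellable_sigma_of_finite (I : Type u) [Finite I] (F : I → Type u)
    [∀ i, RAct S (F i)] (hF : ∀ i, RAct.IsPreconnected S (F i)) : Cancellable S (Σ i, F i) := by
  induction I using Finite.induction_empty_option with
  | of_equiv e ih =>
    exact (ih (fun i => F (e i)) fun i => hF (e i)).of_actIso (ActIso.sigmaCongrLeft e).symm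
  | h_empty => exact RAct.IsPreconnected.of_isEmpty.cancellable
  | h_option ih =>
    exact Cancellable.of_actIso ActIso.sigmaOption
      ((hF none).cancellable.sum (ih _ fun i => hF (some i)))

theorem actIso_sigma_of_partition {A : Type*} [RAct S A] {I : Type*} {T : I → Set A}
    (hT : ∀ i, IsSubact S (T i)) (hdisj : ∀ i j, i ≠ j → T i ∩ T j = ∅)
    (hcover : ⋃ i, T i = Set.univ) :
    letI : ∀ i, RAct S (T i) := fun i => (hT i).ract
    ActIso S A (Σ i, T i) := by
  let _ : ∀ i, RAct S (T i) := fun i => (hT i).ract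
  have hunique (a : A) : ∃! i, a ∈ T i := by
    obtain ⟨i, hi⟩ := Set.mem_iUnion.1 (hcover ▸ Set.mem_univ a)
    refine ⟨i, hi, fun j hj => by_contra fun hji => ?_⟩
    exact Set.eq_empty_iff_forall_notMem.1 (hdisj j i hji) a ⟨hj, hi⟩
  exact ActIso.symm ⟨Set.sigmaEquiv T hunique, fun ⟨_, _⟩ _ => rfl⟩

theorem not_cancellable_of_infinite_class {A : Type u} [RAct S A] {I : Type u} {F : I → Type u}
    [∀ i, RAct S (F i)] (hA : ActIso S A (Σ i, F i)) {B : Type u} [RAct S B] [Nonempty B]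
    (hB : RAct.IsPreconnected S B) (X : Set I) [Infinite X] (hX : ∀ i ∈ X, ActIso S B (F i)) :
    ¬Cancellable S A := by
  classical
  have hsplit : ActIso S A ((Σ i : {i // i ∉ X}, F i) ⊕ (X × B)) :=
    hA.trans <| (ActIso.sigmaSplit (· ∈ X)).trans <|
      ((ActIso.sigmaEquivProd (F := fun i : X => F i) fun i => (hX i i.2).symm).sumCongr
        .refl).trans .sumComm
  have habsorb : ActIso S (A ⊕ B) A :=
    (hsplit.sumCongr .refl).trans <| ActIso.sumAssoc.trans <|
      (ActIso.refl.sumCongr ActIso.prod_sum_absorb).trans hsplit.symm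
  intro hc
  exact hB.not_actIso_sum <|
    hc B (B ⊕ B) (ActIso.sumAssoc.symm.trans (habsorb.sumCongr .refl)).symm

theorem exists_infinite_class {I : Type*} [Infinite I] (cls : I → Set I) (hmem : ∀ i, i ∈ cls i)
    (hfin : {C | ∃ i, C = cls i}.Finite) : ∃ i, (cls i).Infinite := by
  by_contra! h
  refine Set.infinite_univ (α := I) ((hfin.sUnion ?_).subset fun i _ => ⟨cls i, ⟨i, rfl⟩, hmem i⟩)
  rintro _ ⟨i, rfl⟩
  exact h i

end

theorem cancellable_iff_finitelyDecomposable_general (S : Type u) [Monoid S] (A : Type u)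
    [RAct S A] (I : Type u) (T : I → Set A)
    (hind : ∀ i, IndecompSubact S (T i))
    (hdisj : ∀ i j, i ≠ j → T i ∩ T j = ∅)
    (hcover : (⋃ i, T i) = Set.univ)
    (hquot : {C : Set I |
      ∃ i : I, C = {j : I | SubactIso (hind i).1 (hind j).1}}.Finite) :
    Cancellable S A ↔ Finite I := by
  let _ : ∀ i, RAct S (T i) := fun i => (hind i).1.ract
  have hA : ActIso S A (Σ i, T i) := actIso_sigma_of_partition (fun i => (hind i).1) hdisj hcover
  have hconn (i : I) : RAct.IsPreconnected S (T i) := (hind i).isPreconnected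
  constructor
  · intro hc
    by_contra hI
    have : Infinite I := not_finite_iff_infinite.1 hI
    obtain ⟨i, hi⟩ := exists_infinite_class (fun i => {j | SubactIso (hind i).1 (hind j).1})
      (fun i => ActIso.refl) hquot
    have := hi.to_subtype
    have := (hind i).1.1.to_subtype
    exact not_cancellable_of_infinite_class hA (hconn i) {j | SubactIso (hind i).1 (hind j).1}
      (fun _ hj => hj) hc
  · intro hI
    exact (cancellable_sigma_of_finite I _ hconn).of_actIso hA

/-- Let `A = ⨆_{i ∈ I} A_i` be the decomposition of `A` into
indecomposable subacts, and suppose the quotient `I/∼` (where `i ∼ j` iff `A_i ≅ A_j`)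
is finite. Then `A` is cancellable iff `A` is finitely decomposable, i.e. `I` is finite. -/
theorem cancellable_iff_finitelyDecomposable (S : Type u) [Monoid S] (A : Type u)
    [RAct S A] [Nonempty A] (I : Type u) (T : I → Set A)
    (hind : ∀ i, IndecompSubact S (T i))
    (hdisj : ∀ i j, i ≠ j → T i ∩ T j = ∅)
    (hcover : (⋃ i, T i) = Set.univ)
    (hquot : {C : Set I |
      ∃ i : I, C = {j : I | SubactIso (hind i).1 (hind j).1}}.Finite) :
    Cancellable S A ↔ Finite I :=
  cancellable_iff_finitelyDecomposable_general S A I T hind hdisj hcover hquot
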